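/- arXiv:1805.04313 — 3 statements merged into one kernel-verified Lean document; each statement's English description precedes it below -/
import Mathlib

section
/- For z₁, z₂ in the punctured plane ℂ* = ℂ∖{0}, write z₁ = r₁e^{it₁}, z₂ = r₂e^{it₂} with θ ∈ [0,π] the measure of the convex angle between z₁ and z₂. Then the quasihyperbolic distance in ℂ* with density ρ(z) = 1/|z| satisfies k(z₁,z₂) = √( (ln(r₂/r₁))² + θ² ). -/
open Complex Set MeasureTheory intervalIntegral

noncomputable def qhDist (z₁ z₂ : ℂ) : ℝ :=
  sInf {l : ℝ | ∃ γ γ' : ℝ → ℂ,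
    γ 0 = z₁ ∧ γ 1 = z₂ ∧
    (∀ t ∈ Set.Icc (0:ℝ) 1, γ t ≠ 0) ∧
    (∀ t ∈ Set.Icc (0:ℝ) 1, HasDerivAt γ (γ' t) t) ∧
    ContinuousOn γ' (Set.Icc (0:ℝ) 1) ∧
    l = ∫ t in (0:ℝ)..1, ‖γ' t‖ / ‖γ t‖}

/-!
Both sides equal `‖log (z₂ / z₁)‖`. Along any admissible curve `γ`, the integral
`ζ = ∫ γ'/γ` is a logarithm of `z₂ / z₁`, so `ζ = log (z₂ / z₁) + 2πin`; since the principal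
branch has `|arg| ≤ π` it has the smallest modulus among all logarithms, whence
`‖log (z₂ / z₁)‖ ≤ ‖ζ‖ ≤ ∫ ‖γ'‖ / ‖γ‖`. The logarithmic spiral `t ↦ z₁ exp (t log (z₂ / z₁))`
attains this bound.
-/

namespace Complex

theorem abs_arg_le_abs_arg_add_int_mul_two_pi (w : ℂ) (n : ℤ) :
    |arg w| ≤ |arg w + n * (2 * Real.pi)| := by
  rcases eq_or_ne n 0 with rfl | hn
  · simp
  have h_one_le : (1 : ℝ) ≤ |(n : ℝ)| := by exact_mod_cast Int.one_le_abs hn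
  have h_arg := abs_arg_le_pi w
  calc |arg w| ≤ |(n : ℝ) * (2 * Real.pi)| - |arg w| := by
        rw [abs_mul, abs_of_pos Real.two_pi_pos]; nlinarith [Real.pi_pos]
    _ ≤ |arg w + n * (2 * Real.pi)| := by
        have := abs_sub_abs_le_abs_add ((n : ℝ) * (2 * Real.pi)) (arg w)
        rwa [add_comm (arg w)]

theorem norm_log_le_of_exp_eq {ζ w : ℂ} (h : exp ζ = w) : ‖log w‖ ≤ ‖ζ‖ := by
  have hw : w ≠ 0 := h ▸ exp_ne_zero ζ
  obtain ⟨n, rfl⟩ : ∃ n : ℤ, ζ = log w + n * (2 * Real.pi * I) := by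
    rw [← exp_eq_exp_iff_exists_int, h, exp_log hw]
  have h_im : |(log w).im| ≤ |(log w + n * (2 * Real.pi * I)).im| := by
    simpa [log_im] using abs_arg_le_abs_arg_add_int_mul_two_pi w n
  rw [norm_eq_sqrt_sq_add_sq, norm_eq_sqrt_sq_add_sq]
  exact Real.sqrt_le_sqrt (add_le_add (by simp) (sq_le_sq.mpr h_im))

theorem norm_log_eq_sqrt (w : ℂ) : ‖log w‖ = √(Real.log ‖w‖ ^ 2 + |arg w| ^ 2) := by
  rw [norm_eq_sqrt_sq_add_sq, log_re, log_im, sq_abs]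

end Complex

theorem hasDerivAt_integral_of_continuousOn {f : ℝ → ℂ} {a b x : ℝ}
    (hf : ContinuousOn f (Icc a b)) (hx : x ∈ Ioo a b) :
    HasDerivAt (fun u => ∫ t in a..u, f t) (f x) x := by
  refine integral_hasDerivAt_right ?_ ?_ (hf.continuousAt (Icc_mem_nhds hx.1 hx.2))
  · have h_sub : uIcc a x ⊆ Icc a b := by
      rw [uIcc_of_le hx.1.le]; exact Icc_subset_Icc_right hx.2.le
    exact (hf.mono h_sub).intervalIntegrable
  · exact (hf.mono Ioo_subset_Icc_self).stronglyMeasurableAtFilter isOpen_Ioo x hx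

theorem mul_exp_integral_div_eq {γ γ' : ℝ → ℂ} {a b : ℝ} (hab : a ≤ b)
    (hne : ∀ t ∈ Icc a b, γ t ≠ 0) (hd : ∀ t ∈ Icc a b, HasDerivAt γ (γ' t) t)
    (hc : ContinuousOn γ' (Icc a b)) :
    γ a * exp (∫ t in a..b, γ' t / γ t) = γ b := by
  have hγ : ContinuousOn γ (Icc a b) := fun t ht => (hd t ht).continuousAt.continuousWithinAt
  have hf : ContinuousOn (fun t => γ' t / γ t) (Icc a b) := hc.div hγ hne
  set F : ℝ → ℂ := fun u => ∫ t in a..u, γ' t / γ t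
  -- `γ · exp (-F)` has zero derivative, hence is constant.
  have hF : ContinuousOn F (Icc a b) := by
    simpa [uIcc_of_le hab] using
      continuousOn_primitive_interval (hf.mono (uIcc_of_le hab).subset).integrableOn_Icc
  have h_deriv : ∀ x ∈ Ioo a b,
      HasDerivWithinAt (fun t => γ t * exp (-F t)) 0 (Ioi x) x := by
    intro x hx
    have hx' := Ioo_subset_Icc_self hx
    refine ((hd x hx').fun_mul (hasDerivAt_integral_of_continuousOn hf hx).fun_neg.cexp
      |>.congr_deriv ?_).hasDerivWithinAt
    linear_combination -cexp (-F x) * mul_div_cancel₀ (γ' x) (hne x hx')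
  have h_const := integral_eq_sub_of_hasDeriv_right_of_le hab (hγ.mul hF.neg.cexp) h_deriv
    intervalIntegrable_const
  simp only [intervalIntegral.integral_zero, Pi.mul_apply, Pi.neg_apply, F, integral_same,
    neg_zero, exp_zero, mul_one] at h_const
  rw [← eq_of_sub_eq_zero h_const.symm, mul_assoc, ← exp_add, neg_add_cancel, exp_zero, mul_one]

theorem norm_log_div_le_integral {z₁ z₂ : ℂ} {γ γ' : ℝ → ℂ} (hγ₀ : γ 0 = z₁) (hγ₁ : γ 1 = z₂)
    (hne : ∀ t ∈ Icc (0 : ℝ) 1, γ t ≠ 0) (hd : ∀ t ∈ Icc (0 : ℝ) 1, HasDerivAt γ (γ' t) t)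
    (hc : ContinuousOn γ' (Icc (0 : ℝ) 1)) :
    ‖log (z₂ / z₁)‖ ≤ ∫ t in (0 : ℝ)..1, ‖γ' t‖ / ‖γ t‖ := by
  have h_exp : exp (∫ t in (0 : ℝ)..1, γ' t / γ t) = z₂ / z₁ := by
    rw [← hγ₀, ← hγ₁, ← mul_exp_integral_div_eq zero_le_one hne hd hc,
      mul_div_cancel_left₀ _ (hne 0 (left_mem_Icc.2 zero_le_one))]
  calc ‖log (z₂ / z₁)‖ ≤ ‖∫ t in (0 : ℝ)..1, γ' t / γ t‖ := norm_log_le_of_exp_eq h_exp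
    _ ≤ ∫ t in (0 : ℝ)..1, ‖γ' t / γ t‖ := norm_integral_le_integral_norm zero_le_one
    _ = ∫ t in (0 : ℝ)..1, ‖γ' t‖ / ‖γ t‖ := by simp only [norm_div]

theorem exists_spiral_integral_eq_norm_log {z₁ z₂ : ℂ} (h₁ : z₁ ≠ 0) (h₂ : z₂ ≠ 0) :
    ∃ γ γ' : ℝ → ℂ, γ 0 = z₁ ∧ γ 1 = z₂ ∧ (∀ t ∈ Icc (0 : ℝ) 1, γ t ≠ 0) ∧
      (∀ t ∈ Icc (0 : ℝ) 1, HasDerivAt γ (γ' t) t) ∧ ContinuousOn γ' (Icc (0 : ℝ) 1) ∧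
      ‖log (z₂ / z₁)‖ = ∫ t in (0 : ℝ)..1, ‖γ' t‖ / ‖γ t‖ := by
  set c := log (z₂ / z₁)
  have hγ_ne : ∀ t : ℝ, z₁ * exp (t * c) ≠ 0 := fun t => mul_ne_zero h₁ (exp_ne_zero _)
  refine ⟨fun t => z₁ * exp (t * c), fun t => c * (z₁ * exp (t * c)),
    by simp, ?_, fun t _ => hγ_ne t, fun t _ => ?_, by fun_prop, ?_⟩
  · simp [c, exp_log (div_ne_zero h₂ h₁), mul_div_cancel₀ _ h₁]
  · have h_lin : HasDerivAt (fun s : ℝ => (s : ℂ) * c) c t := by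
      simpa using (hasDerivAt_id t).ofReal_comp.mul_const c
    exact (h_lin.cexp.const_mul z₁).congr_deriv (by ring)
  · have h_ratio : ∀ t : ℝ, ‖c * (z₁ * exp (t * c))‖ / ‖z₁ * exp (t * c)‖ = ‖c‖ := fun t => by
      rw [norm_mul, mul_div_assoc, div_self (norm_ne_zero_iff.2 (hγ_ne t)), mul_one]
    simp only [h_ratio]
    simp

/-- Martin–Osgood formula: for `z₁, z₂ ∈ ℂ*` with `zₖ = rₖ e^{i tₖ}` and `θ ∈ [0,π]`
the convex angle between them, `k(z₁,z₂) = √((ln(r₂/r₁))² + θ²)`. -/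
theorem stmt_2 (z₁ z₂ : ℂ) (h₁ : z₁ ≠ 0) (h₂ : z₂ ≠ 0) :
    qhDist z₁ z₂ =
      Real.sqrt ((Real.log (‖z₂‖ / ‖z₁‖))^2 +
        |Complex.arg (z₂ / z₁)|^2) := by
  rw [← norm_div, ← norm_log_eq_sqrt, qhDist]
  refine IsLeast.csInf_eq ⟨exists_spiral_integral_eq_norm_log h₁ h₂, ?_⟩
  rintro l ⟨γ, γ', hγ₀, hγ₁, hne, hd, hc, rfl⟩
  exact norm_log_div_le_integral hγ₀ hγ₁ hne hd hc
end

section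
/- Let γ : [0, L] → ℂ be an arc-length parametrization of a curve with γ(0) = 0, γ'(0) = 1, and |γ'(t) − γ'(s)| ≤ l₁|t − s|^{μ}. Suppose additionally the arc-chord condition at 0: s ≤ b·|γ(s)| for all small s. Write γ(s) = R(s)e^{iΨ(s)} with Ψ(s) → 0 as s → 0⁺. Then there exist ε > 0 and a constant c = (π/2)·l₁·b^{1+μ} such that |Ψ(s)| ≤ c·R(s)^{μ} for all 0 < s < ε. -/
open Set Complex Filter

/-!
Since `γ'(0) = 1` and `γ'` is `μ`-Hölder, the mean value inequality applied to `γ(t) - t` gives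
`|Im γ(s)| ≤ l₁ s^{1+μ}`. In polar form `Im γ(s) = R sin Ψ` with `R = |γ(s)|`, and near `0` we have
`|Ψ| ≤ π/2`, where Jordan's inequality `|Ψ| ≤ (π/2)|sin Ψ|` holds. Hence
`R|Ψ| ≤ (π/2) l₁ s^{1+μ} ≤ (π/2) l₁ (bR)^{1+μ}` by the arc-chord condition, and dividing by `R`
gives the claim.
-/

theorem norm_sub_sub_smul_le_rpow_of_holder_deriv {E : Type*} [NormedAddCommGroup E]
    [NormedSpace ℝ E] {f f' : ℝ → E} {a x C μ : ℝ} (hC : 0 ≤ C) (hμ : 0 ≤ μ) (hax : a ≤ x)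
    (hf : ∀ t ∈ Icc a x, HasDerivAt f (f' t) t)
    (hf' : ∀ t ∈ Icc a x, ‖f' t - f' a‖ ≤ C * (t - a) ^ μ) :
    ‖f x - f a - (x - a) • f' a‖ ≤ C * (x - a) ^ (1 + μ) := by
  have hderiv : ∀ t ∈ Icc a x,
      HasDerivWithinAt (fun t ↦ f t - t • f' a) (f' t - f' a) (Icc a x) t := fun t ht ↦
    ((hf t ht).sub ((hasDerivAt_id t).smul_const (f' a))).hasDerivWithinAt.congr_deriv
      (by simp)
  have hbound : ∀ t ∈ Ico a x, ‖f' t - f' a‖ ≤ C * (x - a) ^ μ := fun t ht ↦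
    (hf' t (Ico_subset_Icc_self ht)).trans <| by
      gcongr
      · exact sub_nonneg.2 ht.1
      · exact ht.2.le
  have hmvt := norm_image_sub_le_of_norm_deriv_le_segment' hderiv hbound x (right_mem_Icc.2 hax)
  rw [Real.rpow_one_add' (sub_nonneg.2 hax) (by positivity)]
  calc ‖f x - f a - (x - a) • f' a‖ = ‖f x - x • f' a - (f a - a • f' a)‖ := by
        rw [sub_smul]; congr 1; abel
    _ ≤ C * (x - a) ^ μ * (x - a) := hmvt
    _ = C * ((x - a) * (x - a) ^ μ) := by ring

theorem im_ofReal_mul_exp_I_mul (R ψ : ℝ) : ((R : ℂ) * exp (I * ψ)).im = R * Real.sin ψ := by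
  rw [mul_comm I, im_ofReal_mul, exp_ofReal_mul_I_im]

theorem abs_le_of_abs_mul_sin_le_rpow {R ψ s l b μ : ℝ} (hR : 0 < R) (hψ : |ψ| ≤ Real.pi / 2)
    (hs : 0 ≤ s) (hsR : s ≤ b * R) (hl : 0 ≤ l) (hb : 0 ≤ b) (hμ : 0 ≤ μ)
    (h : |R * Real.sin ψ| ≤ l * s ^ (1 + μ)) :
    |ψ| ≤ Real.pi / 2 * l * b ^ (1 + μ) * R ^ μ := by
  have hjordan : |ψ| ≤ Real.pi / 2 * |Real.sin ψ| := by
    have := Real.mul_abs_le_abs_sin hψ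
    rw [div_mul_eq_mul_div, div_le_iff₀ Real.pi_pos] at this
    linarith
  refine le_of_mul_le_mul_left ?_ hR
  calc R * |ψ| ≤ Real.pi / 2 * |R * Real.sin ψ| := by
        rw [abs_mul, abs_of_pos hR]
        nlinarith
    _ ≤ Real.pi / 2 * (l * (b * R) ^ (1 + μ)) := by gcongr; exact h.trans (by gcongr)
    _ = R * (Real.pi / 2 * l * b ^ (1 + μ) * R ^ μ) := by
        rw [Real.mul_rpow hb hR.le, Real.rpow_one_add' hR.le (by positivity)]
        ring

theorem stmt_9_general (L l₁ μ b : ℝ) (hl₁ : 0 < l₁) (hμ0 : 0 < μ)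
    (hb : 0 < b)
    (γ g : ℝ → ℂ) (h0 : γ 0 = 0) (hg0 : g 0 = 1)
    (hderiv : ∀ s ∈ Set.Icc (0:ℝ) L, HasDerivAt γ (g s) s)
    (hlyap : ∀ s ∈ Set.Icc (0:ℝ) L, ∀ t ∈ Set.Icc (0:ℝ) L,
      ‖g t - g s‖ ≤ l₁ * |t - s| ^ μ)
    (δ : ℝ) (hδ : 0 < δ)
    (harcchord : ∀ s ∈ Set.Ioc (0:ℝ) δ, s ≤ L → s ≤ b * ‖γ s‖)
    (Ψ : ℝ → ℝ)
    (hpolar : ∀ s ∈ Set.Ioc (0:ℝ) L, γ s = (‖γ s‖ : ℂ) * Complex.exp (Complex.I * Ψ s))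
    (hΨ0 : Tendsto Ψ (nhdsWithin 0 (Set.Ioi (0:ℝ))) (nhds 0)) :
    ∃ ε > 0, ∀ s : ℝ, 0 < s → s < ε → s ≤ L →
      |Ψ s| ≤ (Real.pi / 2) * l₁ * b ^ (1 + μ) * (‖γ s‖) ^ μ := by
  have hΨsmall : ∀ᶠ s in nhdsWithin 0 (Ioi 0), |Ψ s| < Real.pi / 2 := by
    have hΨabs := hΨ0.abs
    rw [abs_zero] at hΨabs
    exact hΨabs.eventually_lt_const Real.pi_div_two_pos
  obtain ⟨ε, hε, hεΨ⟩ := (nhdsGT_basis (0 : ℝ)).eventually_iff.1 hΨsmall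
  refine ⟨min ε δ, lt_min hε hδ, fun s hs hsε hsL ↦ ?_⟩
  have hsR := harcchord s ⟨hs, hsε.le.trans (min_le_right _ _)⟩ hsL
  have hsub : Icc 0 s ⊆ Icc 0 L := Icc_subset_Icc_right hsL
  have hγs : ‖γ s - γ 0 - (s - 0) • g 0‖ ≤ l₁ * (s - 0) ^ (1 + μ) :=
    norm_sub_sub_smul_le_rpow_of_holder_deriv hl₁.le hμ0.le hs.le
      (fun t ht ↦ hderiv t (hsub ht)) fun t ht ↦ by
        simpa [abs_of_nonneg ht.1] using hlyap 0 (hsub (left_mem_Icc.2 hs.le)) t (hsub ht)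
  have him : |(γ s).im| ≤ l₁ * s ^ (1 + μ) := by
    simpa [h0, hg0] using (abs_im_le_norm _).trans hγs
  rw [hpolar s ⟨hs, hsL⟩, im_ofReal_mul_exp_I_mul] at him
  exact abs_le_of_abs_mul_sin_le_rpow (pos_of_mul_pos_right (hs.trans_le hsR) hb.le)
    (hεΨ ⟨hs, hsε.trans_le (min_le_left _ _)⟩).le hs.le hsR hl₁.le hb.le hμ0.le him

/-- If `γ` is a `μ`-Lyapunov arc-length parametrization with `γ(0) = 0`, `γ'(0) = 1`,
satisfying the arc-chord condition `s ≤ b|γ(s)|` for small `s`, and `Ψ` is a continuous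
branch of `arg γ(s)` with `Ψ(s) → 0` as `s → 0⁺`, then there is `ε > 0` with
`|Ψ(s)| ≤ (π/2) l₁ b^{1+μ} |γ(s)|^μ` for `0 < s < ε`. -/
theorem stmt_9 (L l₁ μ b : ℝ) (hL : 0 < L) (hl₁ : 0 < l₁) (hμ0 : 0 < μ) (hμ1 : μ < 1)
    (hb : 0 < b)
    (γ g : ℝ → ℂ) (h0 : γ 0 = 0) (hg0 : g 0 = 1)
    (hderiv : ∀ s ∈ Set.Icc (0:ℝ) L, HasDerivAt γ (g s) s)
    (hlyap : ∀ s ∈ Set.Icc (0:ℝ) L, ∀ t ∈ Set.Icc (0:ℝ) L,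
      ‖g t - g s‖ ≤ l₁ * |t - s| ^ μ)
    (δ : ℝ) (hδ : 0 < δ)
    (harcchord : ∀ s ∈ Set.Ioc (0:ℝ) δ, s ≤ L → s ≤ b * ‖γ s‖)
    (Ψ : ℝ → ℝ)
    (hpolar : ∀ s ∈ Set.Ioc (0:ℝ) L, γ s = (‖γ s‖ : ℂ) * Complex.exp (Complex.I * Ψ s))
    (hΨcont : ContinuousOn Ψ (Set.Ioc (0:ℝ) L))
    (hΨ0 : Tendsto Ψ (nhdsWithin 0 (Set.Ioi (0:ℝ))) (nhds 0)) :
    ∃ ε > 0, ∀ s : ℝ, 0 < s → s < ε → s ≤ L →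
      |Ψ s| ≤ (Real.pi / 2) * l₁ * b ^ (1 + μ) * (‖γ s‖) ^ μ :=
  stmt_9_general L l₁ μ b hl₁ hμ0 hb γ g h0 hg0 hderiv hlyap δ hδ harcchord Ψ hpolar hΨ0
end

section
/- Suppose h is a (complex-valued) Euclidean harmonic mapping of the unit disk 𝔻 onto a bounded domain D = h(𝔻) that contains the disk B(h(0), R₀), and suppose there is a closed half-plane H_b containing D whose boundary line passes through the point b ∈ ∂D. Then dist(h(z), b) ≥ (1/2)·R₀·(1 − |z|) for all z ∈ 𝔻. -/
/-!
With `n` the inner unit normal of the half-plane, `u z = ⟪n, h z - b⟫` is a harmonic function on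
the disk, nonnegative because `h(𝔻) = D` lies in the half-plane, with `u 0 ≥ R₀` because the disk
`B(h 0, R₀) ⊆ D` does, and `u z ≤ |h z - b|`. Harnack's inequality `u z ≥ (1 - |z|)/(1 + |z|) · u 0`
finishes the proof; it follows from the Poisson formula on smaller disks `|z| < r < 1`, since the
Poisson kernel of the disk of radius `r` is at least `(r - |z|)/(r + |z|)` and averages `u` to `u 0`.
-/

open Complex Metric Set

/-- `u` is harmonic on `s`: it is `C²` there and its Laplacian vanishes. -/
def HarmonicOn' (u : ℂ → ℝ) (s : Set ℂ) : Prop :=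
  ContDiffOn ℝ 2 u s ∧
  ∀ z ∈ s, fderiv ℝ (fun w => fderiv ℝ u w 1) z 1 +
      fderiv ℝ (fun w => fderiv ℝ u w Complex.I) z Complex.I = 0

open InnerProductSpace Filter Topology Real RealInnerProductSpace

theorem HarmonicOn'.harmonicOnNhd {u : ℂ → ℝ} {s : Set ℂ} (hs : IsOpen s)
    (hu : HarmonicOn' u s) : HarmonicOnNhd u s := by
  intro x hx
  refine ⟨hu.1.contDiffAt (hs.mem_nhds hx), ?_⟩
  filter_upwards [hs.mem_nhds hx] with y hy
  have hC2 : ContDiffAt ℝ 2 u y := hu.1.contDiffAt (hs.mem_nhds hy)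
  have hD : DifferentiableAt ℝ (fderiv ℝ u) y :=
    (hC2.fderiv_right (m := 1) (by norm_num)).differentiableAt one_ne_zero
  have hpartial : ∀ v : ℂ, fderiv ℝ (fun w => fderiv ℝ u w v) y v = fderiv ℝ (fderiv ℝ u) y v v :=
    fun v => by simp [fderiv_clm_apply hD (differentiableAt_const v)]
  simpa [laplacian_eq_iteratedFDeriv_complexPlane, iteratedFDeriv_two_apply, hpartial] using
    hu.2 y hy

theorem harmonicOnNhd_inner_sub_of_re_im {h : ℂ → ℂ} {s : Set ℂ} (hs : IsOpen s)
    (hre : HarmonicOn' (fun z => (h z).re) s) (him : HarmonicOn' (fun z => (h z).im) s)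
    (n b : ℂ) : HarmonicOnNhd (fun z => ⟪n, h z - b⟫_ℝ) s := by
  have hinner : (fun z => ⟪n, h z - b⟫_ℝ) =
      n.re • (fun z => (h z).re) + n.im • (fun z => (h z).im) - fun _ => ⟪n, b⟫_ℝ := by
    ext z
    simp only [Complex.inner, mul_re, sub_re, conj_re, sub_im, conj_im, mul_neg, sub_neg_eq_add,
      Pi.sub_apply, Pi.add_apply, Pi.smul_apply, smul_eq_mul]
    ring
  rw [hinner]
  exact (((hre.harmonicOnNhd hs).const_smul).add (him.harmonicOnNhd hs).const_smul).sub
    (harmonicOnNhd_const _)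

theorem InnerProductSpace.HarmonicOnNhd.harnack_closedBall {f : ℂ → ℝ} {c w : ℂ}
    {r : ℝ} (hf : HarmonicOnNhd f (closedBall c r)) (hpos : ∀ z ∈ sphere c r, 0 ≤ f z)
    (hw : w ∈ ball c r) :
    (r - ‖w - c‖) / (r + ‖w - c‖) * f c ≤ f w := by
  have hr : 0 < r := pos_of_mem_ball hw
  have habs : |r| = r := abs_of_pos hr
  have hcont : ContinuousOn f (sphere c |r|) := by
    rw [habs]
    exact hf.contDiffOn.continuousOn.mono sphere_subset_closedBall
  have hmean : circleAverage f c r = f c := HarmonicOnNhd.circleAverage_eq (by rwa [habs])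
  rw [← hf.circleAverage_re_herglotzRieszKernel_smul hw, ← hmean, ← smul_eq_mul,
    ← circleAverage_smul]
  apply circleAverage_mono (hcont.const_smul _).circleIntegrable'
    (((continuous_re.comp_continuousOn (continuousOn_herglotzRieszKernel_sphere hw)).smul
      hcont).circleIntegrable')
  intro z hz
  rw [habs] at hz
  exact mul_le_mul_of_nonneg_right (le_re_herglotzRieszKernel hz hw) (hpos z hz)

theorem InnerProductSpace.HarmonicOnNhd.harnack_ball {f : ℂ → ℝ} {c w : ℂ}
    {R : ℝ} (hf : HarmonicOnNhd f (ball c R)) (hpos : ∀ z ∈ ball c R, 0 ≤ f z)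
    (hw : w ∈ ball c R) :
    (R - ‖w - c‖) / (R + ‖w - c‖) * f c ≤ f w := by
  have hρR : ‖w - c‖ < R := mem_ball_iff_norm.1 hw
  have hlim : Tendsto (fun r => (r - ‖w - c‖) / (r + ‖w - c‖) * f c) (𝓝[<] R)
      (𝓝 ((R - ‖w - c‖) / (R + ‖w - c‖) * f c)) := by
    refine tendsto_nhdsWithin_of_tendsto_nhds (ContinuousAt.tendsto ?_)
    have : R + ‖w - c‖ ≠ 0 := by linarith [norm_nonneg (w - c)]
    fun_prop (disch := assumption)
  refine le_of_tendsto hlim ?_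
  filter_upwards [Ioo_mem_nhdsLT hρR] with r hr
  have hsub : closedBall c r ⊆ ball c R := closedBall_subset_ball hr.2
  exact (hf.mono hsub).harnack_closedBall
    (fun z hz => hpos z (hsub (sphere_subset_closedBall hz))) (mem_ball_iff_norm.2 hr.1)

theorem le_inner_sub_of_ball_subset {E : Type*} [NormedAddCommGroup E] [InnerProductSpace ℝ E]
    {x b n : E} {R : ℝ} (hn : ‖n‖ = 1) (hR : 0 < R)
    (hball : ball x R ⊆ {w | 0 ≤ ⟪n, w - b⟫_ℝ}) : R ≤ ⟪n, x - b⟫_ℝ := by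
  refine le_of_forall_lt_imp_le_of_dense fun t ht => ?_
  have hmem : x - max t 0 • n ∈ ball x R := by
    simp [norm_smul, hn, abs_of_nonneg (le_max_right t 0), ht, hR]
  have hinner : ⟪n, x - max t 0 • n - b⟫_ℝ = ⟪n, x - b⟫_ℝ - max t 0 := by
    rw [sub_right_comm, inner_sub_right, inner_smul_right, real_inner_self_eq_norm_sq, hn]
    ring
  have hmem_half : 0 ≤ ⟪n, x - max t 0 • n - b⟫_ℝ := hball hmem
  linarith [le_max_left t 0]

theorem stmt_11_general (h : ℂ → ℂ) (D : Set ℂ) (R₀ : ℝ) (hR₀ : 0 < R₀) (b n : ℂ)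
    (hharm_re : HarmonicOn' (fun z => (h z).re) (Metric.ball 0 1))
    (hharm_im : HarmonicOn' (fun z => (h z).im) (Metric.ball 0 1))
    (hD : D = h '' Metric.ball 0 1)
    (hball : Metric.ball (h 0) R₀ ⊆ D)
    (hn : ‖n‖ = 1)
    (hhalf : ∀ w ∈ D, 0 ≤ ((w - b) * (starRingEnd ℂ) n).re) :
    ∀ z ∈ Metric.ball (0:ℂ) 1, (1/2) * R₀ * (1 - ‖z‖) ≤ dist (h z) b := by
  intro z hz
  set u : ℂ → ℝ := fun w => ⟪n, h w - b⟫_ℝ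
  have hhalf' : D ⊆ {w | 0 ≤ ⟪n, w - b⟫_ℝ} := fun w hw => by simpa [Complex.inner] using hhalf w hw
  have hu : HarmonicOnNhd u (ball 0 1) :=
    harmonicOnNhd_inner_sub_of_re_im isOpen_ball hharm_re hharm_im n b
  have hu_nonneg : ∀ w ∈ ball (0 : ℂ) 1, 0 ≤ u w :=
    fun w hw => hhalf' (hD ▸ mem_image_of_mem h hw)
  have hu0 : R₀ ≤ u 0 := le_inner_sub_of_ball_subset hn hR₀ (hball.trans hhalf')
  have hharnack := hu.harnack_ball hu_nonneg hz
  have hdist : u z ≤ dist (h z) b := by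
    simpa [u, hn, dist_eq_norm] using real_inner_le_norm n (h z - b)
  have hz1 : ‖z‖ < 1 := mem_ball_zero_iff.1 hz
  have hfactor : (1 - ‖z‖) / 2 ≤ (1 - ‖z‖) / (1 + ‖z‖) :=
    div_le_div_of_nonneg_left (by linarith) (by positivity) (by linarith)
  calc (1/2) * R₀ * (1 - ‖z‖) = (1 - ‖z‖) / 2 * R₀ := by ring
    _ ≤ (1 - ‖z‖) / (1 + ‖z‖) * u 0 :=
        mul_le_mul hfactor hu0 hR₀.le (div_nonneg (by linarith) (by positivity))
    _ ≤ u z := by simpa using hharnack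
    _ ≤ dist (h z) b := hdist

/-- If `h` is a complex-valued harmonic map of the unit disk onto a bounded domain
`D = h(𝔻)` containing `B(h(0), R₀)`, and `D` lies in a closed half-plane
`{w : ⟨w - b, n⟩ ≥ 0}` whose boundary line passes through `b ∈ ∂D`, then
`dist(h(z), b) ≥ (1/2) R₀ (1 - |z|)` on `𝔻`. -/
theorem stmt_11 (h : ℂ → ℂ) (D : Set ℂ) (R₀ : ℝ) (hR₀ : 0 < R₀) (b n : ℂ)
    (hharm_re : HarmonicOn' (fun z => (h z).re) (Metric.ball 0 1))
    (hharm_im : HarmonicOn' (fun z => (h z).im) (Metric.ball 0 1))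
    (hD : D = h '' Metric.ball 0 1) (hbd : Bornology.IsBounded D)
    (hball : Metric.ball (h 0) R₀ ⊆ D)
    (hn : ‖n‖ = 1)
    (hhalf : ∀ w ∈ D, 0 ≤ ((w - b) * (starRingEnd ℂ) n).re)
    (hbbd : b ∈ frontier D) :
    ∀ z ∈ Metric.ball (0:ℂ) 1, (1/2) * R₀ * (1 - ‖z‖) ≤ dist (h z) b :=
  stmt_11_general h D R₀ hR₀ b n hharm_re hharm_im hD hball hn hhalf
end
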